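/- Let 0 < λ ≤ √6 and let J denote the 3×3 Jacobian matrix of the reduced vector field F at the critical point P₂ = (0, √((6−λ²)/18), λ/3). Then the characteristic polynomial of J is (X − (λ²/6 − 1))²·(X − (λ²/3 − 2/3)); i.e., the linearization at P₂ has eigenvalues ε₁ = −1 + λ²/6 (with algebraic multiplicity two) and ε₂ = −2/3 + λ²/3. In particular all eigenvalues are negative for λ < √2. -/
import Mathlib


/-- The reduced vector field `F : ℝ³ → ℝ³` in the variables `(S, U, P)`. -/
noncomputable def Fvec (lam : ℝ) (x : Fin 3 → ℝ) : Fin 3 → ℝ :=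
  ![-1 / (3 * Real.sqrt 3) - (2 / 3) * x 0 + x 0 ^ 2 / Real.sqrt 3
      + x 1 ^ 2 / Real.sqrt 3 + x 2 ^ 2 / (2 * Real.sqrt 3)
      + 2 * x 0 ^ 3 - x 0 * x 1 ^ 2 + x 0 * x 2 ^ 2,
    x 1 * (1 / 3 - (lam / 2) * x 2 + 2 * x 0 ^ 2 - x 1 ^ 2 + x 2 ^ 2),
    -(2 / 3) * x 2 + lam * x 1 ^ 2 + 2 * x 0 ^ 2 * x 2 - x 1 ^ 2 * x 2
      + x 2 ^ 3]

/-- The Jacobian matrix of `F` at `x`: entry `(i, j)` is the partial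
derivative of the `i`-th component with respect to the `j`-th variable. -/
noncomputable def jac (lam : ℝ) (x : Fin 3 → ℝ) : Matrix (Fin 3) (Fin 3) ℝ :=
  Matrix.of fun i j => deriv (fun s => Fvec lam (Function.update x j s) i) (x j)

lemma deriv_cubic (a b c d t : ℝ) :
    deriv (fun s : ℝ => a + b * s + c * s ^ 2 + d * s ^ 3) t
      = b + 2 * c * t + 3 * d * t ^ 2 := by
  have h : HasDerivAt (fun s : ℝ => a + b * s + c * s ^ 2 + d * s ^ 3)
      (0 + b * 1 + c * ((2 : ℕ) * t ^ 1) + d * ((3 : ℕ) * t ^ 2)) t :=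
    (((hasDerivAt_const t a).add ((hasDerivAt_id t).const_mul b)).add
      ((hasDerivAt_pow 2 t).const_mul c)).add ((hasDerivAt_pow 3 t).const_mul d)
  rw [h.deriv]; push_cast; ring


open Polynomial in
/-- For `0 < λ ≤ √6`, the characteristic polynomial of the
Jacobian of the reduced vector field at the critical point
`P₂ = (0, √((6−λ²)/18), λ/3)` is `(X − (λ²/6 − 1))²·(X − (λ²/3 − 2/3))`;
i.e. the linearization at `P₂` has eigenvalues `ε₁ = −1 + λ²/6` (algebraic
multiplicity two) and `ε₂ = −2/3 + λ²/3`. In particular all eigenvalues are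
negative for `λ < √2`. -/
theorem charpoly_at_P2 (lam : ℝ) (hlam : 0 < lam) (hlam6 : lam ≤ Real.sqrt 6) :
    (jac lam ![0, Real.sqrt ((6 - lam ^ 2) / 18), lam / 3]).charpoly
        = (X - C (lam ^ 2 / 6 - 1)) ^ 2 * (X - C (lam ^ 2 / 3 - 2 / 3)) ∧
      (lam < Real.sqrt 2 → lam ^ 2 / 6 - 1 < 0 ∧ lam ^ 2 / 3 - 2 / 3 < 0) := by
  set u := Real.sqrt ((6 - lam ^ 2) / 18) with hu
  have hlam2 : lam ^ 2 ≤ 6 := by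
    have := Real.sq_sqrt (by norm_num : (6:ℝ) ≥ 0)
    nlinarith [Real.sqrt_nonneg 6]
  have hu2 : u ^ 2 = (6 - lam ^ 2) / 18 := Real.sq_sqrt (by linarith)
  set pt : Fin 3 → ℝ := ![0, u, lam / 3] with hpt
  -- entries
  have e00 : jac lam pt 0 0 = lam ^ 2 / 6 - 1 := by
    have hf : (fun s => Fvec lam (Function.update pt 0 s) 0)
        = fun s : ℝ => (-1 / (3 * Real.sqrt 3) + u ^ 2 / Real.sqrt 3
            + (lam/3) ^ 2 / (2 * Real.sqrt 3))
          + (-2/3 - u ^ 2 + (lam/3) ^ 2) * s + (1 / Real.sqrt 3) * s ^ 2 + 2 * s ^ 3 := by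
      funext s
      simp [Fvec, hpt, Function.update, Fin.forall_fin_succ]
      ring
    have hp0 : pt 0 = 0 := by simp [hpt]
    rw [jac, Matrix.of_apply, hp0, hf, deriv_cubic, hu2]
    ring
  have e10 : jac lam pt 1 0 = 0 := by
    have hf : (fun s => Fvec lam (Function.update pt 0 s) 1)
        = fun s : ℝ => (u * (1/3 - (lam/2)*(lam/3) - u^2 + (lam/3)^2))
          + 0 * s + (2 * u) * s ^ 2 + 0 * s ^ 3 := by
      funext s
      simp [Fvec, hpt, Function.update]
      ring
    have hp0 : pt 0 = 0 := by simp [hpt]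
    rw [jac, Matrix.of_apply, hp0, hf, deriv_cubic]; ring
  have e20 : jac lam pt 2 0 = 0 := by
    have hf : (fun s => Fvec lam (Function.update pt 0 s) 2)
        = fun s : ℝ => (-(2/3)*(lam/3) + lam*u^2 - u^2*(lam/3) + (lam/3)^3)
          + 0 * s + (2 * (lam/3)) * s ^ 2 + 0 * s ^ 3 := by
      funext s
      simp [Fvec, hpt, Function.update]
      ring
    have hp0 : pt 0 = 0 := by simp [hpt]
    rw [jac, Matrix.of_apply, hp0, hf, deriv_cubic]; ring
  have e11 : jac lam pt 1 1 = lam ^ 2 / 9 - 2 / 3 := by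
    have hf : (fun s => Fvec lam (Function.update pt 1 s) 1)
        = fun s : ℝ => 0 + (1/3 - (lam/2)*(lam/3) + (lam/3)^2) * s + 0 * s ^ 2
            + (-1) * s ^ 3 := by
      funext s
      simp [Fvec, hpt, Function.update]
      ring
    have hp1 : pt 1 = u := by simp [hpt]
    rw [jac, Matrix.of_apply, hp1, hf, deriv_cubic, hu2]; ring
  have e21 : jac lam pt 2 1 = 2 * u * (lam - lam / 3) := by
    have hf : (fun s => Fvec lam (Function.update pt 1 s) 2)
        = fun s : ℝ => (-(2/3)*(lam/3) + (lam/3)^3)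
          + 0 * s + (lam - lam/3) * s ^ 2 + 0 * s ^ 3 := by
      funext s
      simp [Fvec, hpt, Function.update]
      ring
    have hp1 : pt 1 = u := by simp [hpt]
    rw [jac, Matrix.of_apply, hp1, hf, deriv_cubic]; ring
  have e12 : jac lam pt 1 2 = u * (-lam/2 + 2*(lam/3)) := by
    have hf : (fun s => Fvec lam (Function.update pt 2 s) 1)
        = fun s : ℝ => (u * (1/3 - u^2))
          + (-(u*lam/2)) * s + u * s ^ 2 + 0 * s ^ 3 := by
      funext s
      simp [Fvec, hpt, Function.update]
      ring
    have hp2 : pt 2 = lam / 3 := by simp [hpt]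
    rw [jac, Matrix.of_apply, hp2, hf, deriv_cubic]; ring
  have e22 : jac lam pt 2 2 = 7 * lam ^ 2 / 18 - 1 := by
    have hf : (fun s => Fvec lam (Function.update pt 2 s) 2)
        = fun s : ℝ => (lam * u^2)
          + (-2/3 - u^2) * s + 0 * s ^ 2 + 1 * s ^ 3 := by
      funext s
      simp [Fvec, hpt, Function.update]
      ring
    have hp2 : pt 2 = lam / 3 := by simp [hpt]
    rw [jac, Matrix.of_apply, hp2, hf, deriv_cubic, hu2]; ring
  constructor
  · rw [Matrix.charpoly, Matrix.det_fin_three]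
    rw [Matrix.charmatrix_apply_eq, Matrix.charmatrix_apply_eq, Matrix.charmatrix_apply_eq,
      Matrix.charmatrix_apply_ne _ _ _ (by decide), Matrix.charmatrix_apply_ne _ _ _ (by decide),
      Matrix.charmatrix_apply_ne _ _ _ (by decide), Matrix.charmatrix_apply_ne _ _ _ (by decide),
      Matrix.charmatrix_apply_ne _ _ _ (by decide), Matrix.charmatrix_apply_ne _ _ _ (by decide)]
    rw [e00, e10, e20, e11, e21, e12, e22]
    simp only [map_zero, mul_zero, zero_mul, neg_zero, sub_zero, add_zero, zero_add,
      neg_mul, mul_neg, neg_neg, zero_sub, sub_neg_eq_add]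
    have hm : (u * (-lam/2 + 2*(lam/3))) * (2 * u * (lam - lam/3))
        = lam ^ 2 * (6 - lam ^ 2) / 81 := by
      linear_combination (2 * lam ^ 2 / 9) * hu2
    have h12 : (C (u * (-lam/2 + 2*(lam/3))) : ℝ[X]) * C (2 * u * (lam - lam/3))
        = C (lam ^ 2 * (6 - lam ^ 2) / 81) := by
      rw [← C_mul]; exact congrArg C hm
    have h1 : (C (lam^2/9 - 2/3) : ℝ[X]) + C (7*lam^2/18 - 1)
        = C (lam^2/6 - 1) + C (lam^2/3 - 2/3) := by
      rw [← C_add, ← C_add]; congr 1; ring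
    have h2 : (C (lam^2/9 - 2/3) : ℝ[X]) * C (7*lam^2/18 - 1) - C (lam ^ 2 * (6 - lam ^ 2) / 81)
        = C (lam^2/6 - 1) * C (lam^2/3 - 2/3) := by
      rw [← C_mul, ← C_mul, ← C_sub]; congr 1; ring
    linear_combination (-(X - C (lam^2/6 - 1)) * X) * h1 + (X - C (lam^2/6 - 1)) * h2
      - (X - C (lam^2/6 - 1)) * h12
  · intro h2
    have h2' : lam ^ 2 < 2 := by
      have := Real.sq_sqrt (by norm_num : (2:ℝ) ≥ 0)
      nlinarith [Real.sqrt_nonneg 2]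
    constructor <;> nlinarith
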